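/- For every k_T-register transducer T over Boolean inputs I and outputs O (with initial register value d0) and every universal co-Büchi k_A-register automaton A over I ∪ O (with the same initial register value d0): there exists a word w ∈ L(T) rejected by A if and only if there exists a word w_B ∈ L(T_B) rejected by hide_A(AT_B@W). -/

import Mathlib

/-- A register word automaton over Boolean signals `P`, data-domain `D`, states `Q`,
and registers indexed by `R` (for a `k`-register automaton, `R = Fin k`).
The transition function reads a Boolean letter, an input-guard and an output-guard
(comparisons of the data-values of `i` resp. `o` with the registers) and yields
a set of (assignment, successor-state) pairs. -/
structure RegAutomaton (P D Q R : Type) where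
  d0 : D
  q0 : Q
  F : Set Q
  tr : Q → (P → Bool) → (R → Bool) → (R → Bool) → Set ((R → Bool) × Q)

/-- A data-path of a register automaton on the letter sequence `(l j, di j, dout j)`. -/
structure DataPath {P D Q R : Type} [DecidableEq D] (A : RegAutomaton P D Q R)
    (l : ℕ → P → Bool) (di dout : ℕ → D) where
  st : ℕ → Q
  regs : ℕ → R → D
  asgn : ℕ → R → Bool
  init_st : st 0 = A.q0
  init_regs : ∀ n, regs 0 n = A.d0
  step : ∀ j, (asgn j, st (j + 1)) ∈
    A.tr (st j) (l j) (fun n => decide (di j = regs j n)) (fun n => decide (dout j = regs j n))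
  update : ∀ j n, regs (j + 1) n = if asgn j n then di j else regs j n

/-- The register values of the automaton `T_all` along a word: registers start at `d0`
and the value of the data-input is stored into exactly the registers named by the
`Asgn^T` signals of the letter. -/
def tallRegs {D : Type} {kT : ℕ} (d0 : D) (asg : ℕ → Fin kT → Bool) (di : ℕ → D) :
    ℕ → Fin kT → D
  | 0 => fun _ => d0
  | j + 1 => fun n => if asg j n then di j else tallRegs d0 asg di j n

/-- The product `AT = A ⊗ T_all` of a universal co-Büchi `k_A`-register automaton `A`
over `I ∪ O` with the deterministic automaton `T_all` (`k_T` fresh registers, fresh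
signals `Asgn^T` modelled by `Fin kT`): states are `Q × Bool` (the Boolean component
records whether the `T_all`-component is still in `q0`, i.e. not yet in `⊥`); the
co-Büchi set is `F^A × {q0,⊥} ∪ Q^A × {⊥}`; the `A`-component follows `δ^A` on the
`R^A`-parts of the guards, and the `T_all`-component stays alive iff the output-guard
holds for at least one `R^T`-register, storing (while alive) the data-input into exactly
the registers named by the `Asgn^T` signals. -/
def prodTall {I O D Q : Type} {kA : ℕ} (A : RegAutomaton (I ⊕ O) D Q (Fin kA)) (kT : ℕ) :
    RegAutomaton ((I ⊕ O) ⊕ Fin kT) D (Q × Bool) (Fin kA ⊕ Fin kT) where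
  d0 := A.d0
  q0 := (A.q0, true)
  F := {s | s.1 ∈ A.F ∨ s.2 = false}
  tr := fun s l gi go =>
    {x | ((fun n => x.1 (Sum.inl n)), x.2.1) ∈
           A.tr s.1 (fun p => l (Sum.inl p)) (fun n => gi (Sum.inl n)) (fun n => go (Sum.inl n)) ∧
         x.2.2 = (s.2 && decide (∃ n : Fin kT, go (Sum.inr n) = true)) ∧
         ∀ n : Fin kT, x.1 (Sum.inr n) = (x.2.2 && l (Sum.inr n))}

/-- The transition relation of the verifier: its states are partitions of the
register set (modelled as setoids); the guard letter must respect the current partition,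
and the successor partition is determined by the assignment letter. -/
def VTrans {R : Type} (pa pa' : Setoid R) (gi go a : R → Bool) : Prop :=
  (∀ m n : R, pa.r m n → gi m = gi n ∧ go m = go n) ∧
  (∀ m n : R, ¬ pa.r m n → ¬(gi m = true ∧ gi n = true) ∧ ¬(go m = true ∧ go n = true)) ∧
  (∀ m n : R, pa'.r m n ↔
    ((a m = true ∧ a n = true) ∨ (a m = false ∧ a n = true ∧ gi m = true) ∨
     (a m = true ∧ a n = false ∧ gi n = true) ∨ (a m = false ∧ a n = false ∧ pa.r m n)))

/-- A Boolean path of the automaton `AT_B @ W`, over the signals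
`I ∪ O ∪ Asgn^T ∪ G_i^A ∪ G_i^T ∪ O_{k_T} ∪ Asgn^A ∪ Asgn^T`:
`lIO` is the `2^(I∪O)` part, `asgnTP` the raw `Asgn^T` signals of `AT`'s letter,
`gi` the input-guard letter over `R^A ∪ R^T`, `ok : Fin kT` the `O_{k_T}`-encoded
register index replacing the output-guard, and `asgn` the assignment letter over
`R^A ∪ R^T`.  A step requires some output-guard `g_o` whose `R^T`-part contains the
chosen register `ok j`, a joint transition of the Boolean associate of `AT = A ⊗ T_all`,
and a verifier transition on the partitions of `R^A ∪ R^T` (starting from the one-block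
partition `⊤`). -/
structure WPath {I O D Q : Type} {kA : ℕ} (A : RegAutomaton (I ⊕ O) D Q (Fin kA))
    (kT : ℕ) where
  st : ℕ → Q × Bool
  part : ℕ → Setoid (Fin kA ⊕ Fin kT)
  lIO : ℕ → (I ⊕ O) → Bool
  asgnTP : ℕ → Fin kT → Bool
  gi : ℕ → (Fin kA ⊕ Fin kT) → Bool
  ok : ℕ → Fin kT
  asgn : ℕ → (Fin kA ⊕ Fin kT) → Bool
  init_st : st 0 = (A.q0, true)
  init_part : part 0 = ⊤
  step : ∀ j, ∃ go : (Fin kA ⊕ Fin kT) → Bool,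
    go (Sum.inr (ok j)) = true ∧
    (asgn j, st (j + 1)) ∈
      (prodTall A kT).tr (st j) (Sum.elim (lIO j) (asgnTP j)) (gi j) go ∧
    VTrans (part j) (part (j + 1)) (gi j) go (asgn j)

/-- A data-path of `AT = A ⊗ T_all` corresponds to a Boolean path of `AT_B @ W` iff they
visit the same states, carry the same `2^(I ∪ O ∪ Asgn^T)`-letters, the input-guard and
assignment signals encode the comparisons and assignments of the data-path at every step,
and the `O_{k_T}`-letter at each step encodes some register `r^T_j` whose current value
equals the data-path's value of the data-output at that step. -/
def CorrW {I O D Q : Type} [DecidableEq D] {kA kT : ℕ}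
    {A : RegAutomaton (I ⊕ O) D Q (Fin kA)}
    {l : ℕ → ((I ⊕ O) ⊕ Fin kT) → Bool} {di dout : ℕ → D}
    (dp : DataPath (prodTall A kT) l di dout) (wp : WPath A kT) : Prop :=
  (∀ j, wp.st j = dp.st j) ∧
  (∀ j p, wp.lIO j p = l j (Sum.inl p)) ∧
  (∀ j n, wp.asgnTP j n = l j (Sum.inr n)) ∧
  (∀ j r, wp.gi j r = decide (di j = dp.regs j r)) ∧
  (∀ j, wp.asgn j = dp.asgn j) ∧
  (∀ j, dout j = dp.regs j (Sum.inr (wp.ok j)))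

/-- A path of the automaton `hide_A(AT_B @ W)`, over the visible signals
`I ∪ O ∪ Asgn^T ∪ G_i^T ∪ O_{k_T} ∪ Asgn^T`: same states as `AT_B @ W`; a step on a
letter exists iff `AT_B @ W` has a transition on some letter agreeing with it on the
visible signals (the hidden signals `G_i^A` and `Asgn^A` are existentially chosen). -/
structure HPath {I O D Q : Type} {kA : ℕ} (A : RegAutomaton (I ⊕ O) D Q (Fin kA))
    (kT : ℕ) where
  st : ℕ → Q × Bool
  part : ℕ → Setoid (Fin kA ⊕ Fin kT)
  lIO : ℕ → (I ⊕ O) → Bool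
  asgnTP : ℕ → Fin kT → Bool
  giT : ℕ → Fin kT → Bool
  ok : ℕ → Fin kT
  asgnT : ℕ → Fin kT → Bool
  init_st : st 0 = (A.q0, true)
  init_part : part 0 = ⊤
  step : ∀ j, ∃ (giA : Fin kA → Bool) (asgnA : Fin kA → Bool)
      (go : (Fin kA ⊕ Fin kT) → Bool),
    go (Sum.inr (ok j)) = true ∧
    (Sum.elim asgnA (asgnT j), st (j + 1)) ∈
      (prodTall A kT).tr (st j) (Sum.elim (lIO j) (asgnTP j)) (Sum.elim giA (giT j)) go ∧
    VTrans (part j) (part (j + 1)) (Sum.elim giA (giT j)) go (Sum.elim asgnA (asgnT j))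

/-- A path of `AT_B @ W` corresponds to a path of `hide_A(AT_B @ W)` iff they visit the
same states and their letters agree on the visible signals
`I ∪ O ∪ Asgn^T ∪ G_i^T ∪ O_{k_T} ∪ Asgn^T`. -/
def CorrWH {I O D Q : Type} {kA kT : ℕ} {A : RegAutomaton (I ⊕ O) D Q (Fin kA)}
    (wp : WPath A kT) (hp : HPath A kT) : Prop :=
  (∀ j, hp.st j = wp.st j) ∧ (∀ j, hp.part j = wp.part j) ∧
  (∀ j, hp.lIO j = wp.lIO j) ∧ (∀ j, hp.asgnTP j = wp.asgnTP j) ∧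
  (∀ j n, hp.giT j n = wp.gi j (Sum.inr n)) ∧
  (∀ j, hp.ok j = wp.ok j) ∧
  (∀ j n, hp.asgnT j n = wp.asgn j (Sum.inr n))

/-- A `k`-register transducer with Boolean inputs `I`, Boolean outputs `O`,
data-domain `D` and (possibly infinite) state set `S`. -/
structure RegTransducer (I O D S : Type) (k : ℕ) where
  s0 : S
  d0 : D
  tr : S → (I → Bool) → (Fin k → Bool) → (O → Bool) × Fin k × (Fin k → Bool) × S

/-- `(lio, di, dout)` is a word of the register transducer `T`
(an element of `L(T) ⊆ (2^(I∪O) × D × D)^ω`). -/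
def IsWordOf {I O D S : Type} [DecidableEq D] {kT : ℕ} (T : RegTransducer I O D S kT)
    (lio : ℕ → (I ⊕ O) → Bool) (di dout : ℕ → D) : Prop :=
  ∃ (st : ℕ → S) (regs : ℕ → Fin kT → D),
    st 0 = T.s0 ∧ (∀ n, regs 0 n = T.d0) ∧
    ∀ j,
      let r := T.tr (st j) (fun a => lio j (Sum.inl a)) (fun n => decide (di j = regs j n))
      st (j + 1) = r.2.2.2 ∧ (∀ b, lio j (Sum.inr b) = r.1 b) ∧
      dout j = regs j r.2.1 ∧
      (∀ n, regs (j + 1) n = if r.2.2.1 n then di j else regs j n)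

/-- `(inp, giT, outp, asgnT, ok)` is a word of the Boolean associate `T_B` of `T`:
a register-less deterministic transducer with Boolean inputs `I ∪ G_i^T` and Boolean
outputs `O ∪ Asgn^T ∪ O_{k_T}`. -/
def IsBoolWordOf {I O D S : Type} {kT : ℕ} (T : RegTransducer I O D S kT)
    (inp : ℕ → I → Bool) (giT : ℕ → Fin kT → Bool)
    (outp : ℕ → O → Bool) (asgnT : ℕ → Fin kT → Bool) (ok : ℕ → Fin kT) : Prop :=
  ∃ st : ℕ → S, st 0 = T.s0 ∧
    ∀ j,
      let r := T.tr (st j) (inp j) (giT j)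
      st (j + 1) = r.2.2.2 ∧ outp j = r.1 ∧ ok j = r.2.1 ∧ asgnT j = r.2.2.1

/-!
A data-path of `A` on a word of `T`, run alongside the registers of `T`, is a path of
`A ⊗ T_all` whose `T_all`-component never dies, because the output is the value of the selected
register; the kernels of the joint register valuations form a run of the verifier, and forgetting
the `R^A`-signals gives a path of `hide_A(AT_B @ W)`.

Conversely, every run of the verifier is realized by data: choose as input the value of a register
whose input-guard holds, or, if there is none, a value stored in no register (`D` is infinite).
By induction the partitions are then exactly the kernels of the register valuations, so the
guard letters become genuine comparisons, which yields a word of `T` and a data-path of `A`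
visiting the same states; `⊥` is never reached since the output-guard holds for `r^T_(ok j)`.
-/

section Verifier

variable {R D : Type}

def storeData (v : R → D) (a : R → Bool) (d : D) : R → D :=
  fun r => if a r then d else v r

theorem vTrans_ker_storeData [DecidableEq D] (v : R → D) (a : R → Bool) (d e : D) :
    VTrans (Setoid.ker v) (Setoid.ker (storeData v a d))
      (fun r => decide (d = v r)) (fun r => decide (e = v r)) a := by
  refine ⟨fun m n h => ?_, fun m n h => ?_, fun m n => ?_⟩
  · simp only [Setoid.ker_def.mp h, and_self]
  · constructor <;> rintro ⟨hm, hn⟩ <;>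
      exact h ((of_decide_eq_true hm).symm.trans (of_decide_eq_true hn))
  · simp only [Setoid.ker_def, storeData]
    cases a m <;> cases a n <;> simp [eq_comm]

theorem eq_decide_of_ker_guard [DecidableEq D] {v : R → D} {g : R → Bool}
    (hconst : ∀ m n, v m = v n → g m = g n)
    (hsingle : ∀ m n, v m ≠ v n → ¬(g m = true ∧ g n = true))
    {r₀ : R} (h₀ : g r₀ = true) : g = fun r => decide (v r₀ = v r) := by
  funext r
  refine Bool.eq_iff_iff.mpr ⟨fun hr => ?_, fun he => ?_⟩
  · exact decide_eq_true (not_not.mp fun hne => hsingle r₀ r hne ⟨h₀, hr⟩)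
  · exact hconst r₀ r (of_decide_eq_true he) ▸ h₀

theorem VTrans.go_eq_decide [DecidableEq D] {v : R → D} {pa' : Setoid R} {gi go a : R → Bool}
    (hV : VTrans (Setoid.ker v) pa' gi go a) {r₀ : R} (h₀ : go r₀ = true) :
    go = fun r => decide (v r₀ = v r) :=
  eq_decide_of_ker_guard (fun m n h => (hV.1 m n h).2) (fun m n h => (hV.2.1 m n h).2) h₀

open Classical in
noncomputable def dataOfGuard [Finite R] [Infinite D] (g : R → Bool) (v : R → D) : D :=
  if h : ∃ r, g r = true then v h.choose else (Set.finite_range v).exists_notMem.choose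

theorem VTrans.gi_eq_decide [Finite R] [Infinite D] [DecidableEq D] {v : R → D} {pa' : Setoid R}
    {gi go a : R → Bool} (hV : VTrans (Setoid.ker v) pa' gi go a) :
    gi = fun r => decide (dataOfGuard gi v = v r) := by
  unfold dataOfGuard
  split_ifs with h
  · exact eq_decide_of_ker_guard (fun m n h => (hV.1 m n h).1) (fun m n h => (hV.2.1 m n h).1)
      h.choose_spec
  · have hfresh := (Set.finite_range v).exists_notMem.choose_spec
    simp only [not_exists, Bool.not_eq_true] at h
    funext r
    simp only [h r, Bool.false_eq, decide_eq_false_iff_not]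
    exact fun he => hfresh ⟨r, he.symm⟩

theorem VTrans.eq_ker_storeData [DecidableEq D] {v : R → D} {pa' : Setoid R}
    {gi go a : R → Bool} {d : D} (hV : VTrans (Setoid.ker v) pa' gi go a)
    (hgi : gi = fun r => decide (d = v r)) :
    pa' = Setoid.ker (storeData v a d) := by
  have hreal := vTrans_ker_storeData v a d d
  subst hgi
  exact Setoid.ext fun m n => (hV.2.2 m n).trans (hreal.2.2 m n).symm

noncomputable def realizeRegs [Finite R] [Infinite D] (d0 : D) (gi a : ℕ → R → Bool) :
    ℕ → R → D
  | 0 => fun _ => d0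
  | j + 1 =>
    storeData (realizeRegs d0 gi a j) (a j) (dataOfGuard (gi j) (realizeRegs d0 gi a j))

theorem ker_realizeRegs [Finite R] [Infinite D] (d0 : D) {part : ℕ → Setoid R}
    {gi go a : ℕ → R → Bool} (h₀ : part 0 = ⊤)
    (hV : ∀ j, VTrans (part j) (part (j + 1)) (gi j) (go j) (a j)) :
    ∀ j, part j = Setoid.ker (realizeRegs d0 gi a j)
  | 0 => h₀.trans (Setoid.eq_top_iff.mpr fun _ _ => rfl).symm
  | j + 1 => by
    classical
    have hVj := ker_realizeRegs d0 h₀ hV j ▸ hV j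
    exact hVj.eq_ker_storeData hVj.gi_eq_decide

end Verifier

section Transducer

variable {I O D S : Type} [DecidableEq D] {k : ℕ}

theorem isWordOf_iff {T : RegTransducer I O D S k} {lio : ℕ → (I ⊕ O) → Bool}
    {di dout : ℕ → D} :
    IsWordOf T lio di dout ↔
      ∃ (regs : ℕ → Fin k → D) (asgnT : ℕ → Fin k → Bool) (ok : ℕ → Fin k),
        (∀ n, regs 0 n = T.d0) ∧
        (∀ j n, regs (j + 1) n = if asgnT j n then di j else regs j n) ∧
        (∀ j, dout j = regs j (ok j)) ∧
        IsBoolWordOf T (fun j a => lio j (Sum.inl a)) (fun j n => decide (di j = regs j n))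
          (fun j b => lio j (Sum.inr b)) asgnT ok := by
  constructor
  · rintro ⟨st, regs, hst₀, hregs₀, hstep⟩
    refine ⟨regs, _, _, hregs₀, fun j => (hstep j).2.2.2, fun j => (hstep j).2.2.1,
      st, hst₀, fun j => ⟨(hstep j).1, funext (hstep j).2.1, rfl, rfl⟩⟩
  · rintro ⟨regs, asgnT, ok, hregs₀, hupd, hout, st, hst₀, hstep⟩
    refine ⟨st, regs, hst₀, hregs₀, fun j => ?_⟩
    obtain ⟨hst, houtp, hok, hasgn⟩ := hstep j
    exact ⟨hst, fun b => congrFun houtp b, hok ▸ hout j, fun n => hasgn ▸ hupd j n⟩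

end Transducer

section Product

variable {I O D Q : Type} {kA kT : ℕ} {A : RegAutomaton (I ⊕ O) D Q (Fin kA)}

def DataPath.toHPath [DecidableEq D] {lio : ℕ → (I ⊕ O) → Bool} {di dout : ℕ → D}
    (dp : DataPath A lio di dout) (regs : ℕ → Fin kT → D) (asgnT : ℕ → Fin kT → Bool)
    (ok : ℕ → Fin kT) (h₀ : ∀ n, regs 0 n = A.d0)
    (hupd : ∀ j n, regs (j + 1) n = if asgnT j n then di j else regs j n)
    (hout : ∀ j, dout j = regs j (ok j)) : HPath A kT where
  st j := (dp.st j, true)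
  part j := Setoid.ker (Sum.elim (dp.regs j) (regs j))
  lIO := lio
  asgnTP := asgnT
  giT j n := decide (di j = regs j n)
  ok := ok
  asgnT := asgnT
  init_st := by rw [dp.init_st]
  init_part := Setoid.eq_top_iff.mpr fun m n => by
    cases m <;> cases n <;> simp [Setoid.ker_def, dp.init_regs, h₀]
  step j := by
    refine ⟨fun n => decide (di j = dp.regs j n), dp.asgn j,
      fun r => decide (dout j = Sum.elim (dp.regs j) (regs j) r),
      by simp [hout j],
      ⟨dp.step j, (decide_eq_true ⟨ok j, decide_eq_true (hout j)⟩).symm, fun _ => by simp⟩,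
      ?_⟩
    have hstore : Sum.elim (dp.regs (j + 1)) (regs (j + 1)) =
        storeData (Sum.elim (dp.regs j) (regs j)) (Sum.elim (dp.asgn j) (asgnT j)) (di j) := by
      funext r
      cases r with
      | inl n => exact dp.update j n
      | inr n => exact hupd j n
    rw [hstore]
    convert vTrans_ker_storeData (Sum.elim (dp.regs j) (regs j)) _ (di j) (dout j) using 2 with r
    cases r <;> rfl

theorem HPath.alive (hp : HPath A kT) : ∀ j, (hp.st j).2 = true
  | 0 => by rw [hp.init_st]
  | j + 1 => by
    obtain ⟨_, _, go, hgo, ⟨_, halive, _⟩, _⟩ := hp.step j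
    rw [halive, hp.alive j]
    simpa using ⟨hp.ok j, hgo⟩

theorem HPath.exists_dataPath [Infinite D] [DecidableEq D] (hp : HPath A kT) :
    ∃ (di : ℕ → D) (regs : ℕ → Fin kT → D)
      (dp : DataPath A hp.lIO di fun j => regs j (hp.ok j)),
      (∀ n, regs 0 n = A.d0) ∧
      (∀ j, hp.giT j = fun n => decide (di j = regs j n)) ∧
      (∀ j n, regs (j + 1) n = if hp.asgnT j n then di j else regs j n) ∧
      ∀ j, dp.st j = (hp.st j).1 := by
  choose giA asgnA go hgo hmem hV using hp.step
  set gi := fun j => Sum.elim (giA j) (hp.giT j)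
  set a := fun j => Sum.elim (asgnA j) (hp.asgnT j)
  set v := realizeRegs A.d0 gi a
  have hker := ker_realizeRegs A.d0 hp.init_part hV
  have hVv : ∀ j, VTrans (Setoid.ker (v j)) (hp.part (j + 1)) (gi j) (go j) (a j) :=
    fun j => hker j ▸ hV j
  set di := fun j => dataOfGuard (gi j) (v j)
  have hgiA : ∀ j n, giA j n = decide (di j = v j (Sum.inl n)) :=
    fun j n => congrFun (hVv j).gi_eq_decide (Sum.inl n)
  have hgoA : ∀ j n, go j (Sum.inl n) = decide (v j (Sum.inr (hp.ok j)) = v j (Sum.inl n)) :=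
    fun j n => congrFun ((hVv j).go_eq_decide (hgo j)) _
  refine ⟨di, fun j n => v j (Sum.inr n),
    ⟨fun j => (hp.st j).1, fun j n => v j (Sum.inl n), asgnA, by rw [hp.init_st],
      fun _ => rfl, fun j => ?_, fun _ _ => rfl⟩,
    fun _ => rfl, fun j => funext fun n => congrFun (hVv j).gi_eq_decide (Sum.inr n),
    fun _ _ => rfl, fun _ => rfl⟩
  have hstep := (hmem j).1
  simp only [Sum.elim_inl, hgiA, hgoA] at hstep
  exact hstep

end Product

theorem stmt12_general (D I O Q S : Type) [Infinite D] [DecidableEq D]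
    (kA kT : ℕ)
    (A : RegAutomaton (I ⊕ O) D Q (Fin kA)) (T : RegTransducer I O D S kT)
    (hd0 : T.d0 = A.d0) :
    (∃ (lio : ℕ → (I ⊕ O) → Bool) (di dout : ℕ → D),
        IsWordOf T lio di dout ∧
        ∃ dp : DataPath A lio di dout, ∀ N, ∃ j, N ≤ j ∧ dp.st j ∈ A.F) ↔
    (∃ (inp : ℕ → I → Bool) (giT : ℕ → Fin kT → Bool) (outp : ℕ → O → Bool)
        (asgnT : ℕ → Fin kT → Bool) (ok : ℕ → Fin kT),
        IsBoolWordOf T inp giT outp asgnT ok ∧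
        ∃ hp : HPath A kT,
          (∀ j, hp.lIO j = Sum.elim (inp j) (outp j)) ∧
          (∀ j, hp.asgnTP j = asgnT j) ∧
          (∀ j, hp.giT j = giT j) ∧
          (∀ j, hp.ok j = ok j) ∧
          (∀ j, hp.asgnT j = asgnT j) ∧
          ∀ N, ∃ j, N ≤ j ∧ ((hp.st j).1 ∈ A.F ∨ (hp.st j).2 = false)) := by
  constructor
  · rintro ⟨lio, di, dout, hw, dp, hF⟩
    obtain ⟨regs, asgnT, ok, h₀, hupd, hout, hB⟩ := isWordOf_iff.mp hw
    refine ⟨_, _, _, asgnT, ok, hB, dp.toHPath regs asgnT ok (hd0 ▸ h₀) hupd hout,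
      fun j => (Sum.elim_comp_inl_inr (lio j)).symm, fun _ => rfl, fun _ => rfl, fun _ => rfl,
      fun _ => rfl, fun N => ?_⟩
    obtain ⟨j, hj, hFj⟩ := hF N
    exact ⟨j, hj, Or.inl hFj⟩
  · rintro ⟨inp, giT, outp, asgnT, ok, hB, hp, hlio, -, hgiT, hok, hasgnT, hF⟩
    obtain ⟨di, regs, dp, h₀, hgi, hupd, hst⟩ := hp.exists_dataPath
    obtain rfl : inp = fun j a => hp.lIO j (Sum.inl a) := funext fun j => by rw [hlio]; rfl
    obtain rfl : outp = fun j b => hp.lIO j (Sum.inr b) := funext fun j => by rw [hlio]; rfl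
    obtain rfl : giT = fun j n => decide (di j = regs j n) :=
      funext fun j => (hgiT j).symm.trans (hgi j)
    obtain rfl : ok = hp.ok := funext fun j => (hok j).symm
    obtain rfl : asgnT = hp.asgnT := funext fun j => (hasgnT j).symm
    refine ⟨hp.lIO, di, _,
      isWordOf_iff.mpr ⟨regs, hp.asgnT, hp.ok, hd0 ▸ h₀, hupd, fun _ => rfl, hB⟩, dp,
      fun N => ?_⟩
    obtain ⟨j, hj, hFj | hdead⟩ := hF N
    · exact ⟨j, hj, hst j ▸ hFj⟩
    · exact absurd hdead (by rw [hp.alive j]; decide)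

/-- for every `k_T`-register transducer `T` and universal co-Büchi
`k_A`-register automaton `A` over `I ∪ O` (with the same initial register value):
some word of `T` is rejected by `A` (some data-path of `A` on it visits `F` infinitely
often) iff some word of the Boolean associate `T_B` is rejected by `hide_A(AT_B @ W)`
(some path of `hide_A(AT_B @ W)` carrying that word visits the co-Büchi set
`F^A × {q0,⊥} ∪ Q^A × {⊥}` infinitely often). -/
theorem stmt12 (D I O Q S : Type) [Infinite D] [DecidableEq D]
    [Finite I] [Finite O] [Finite Q]
    (kA kT : ℕ) (hkT : 1 ≤ kT)
    (A : RegAutomaton (I ⊕ O) D Q (Fin kA)) (T : RegTransducer I O D S kT)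
    (hd0 : T.d0 = A.d0) :
    (∃ (lio : ℕ → (I ⊕ O) → Bool) (di dout : ℕ → D),
        IsWordOf T lio di dout ∧
        ∃ dp : DataPath A lio di dout, ∀ N, ∃ j, N ≤ j ∧ dp.st j ∈ A.F) ↔
    (∃ (inp : ℕ → I → Bool) (giT : ℕ → Fin kT → Bool) (outp : ℕ → O → Bool)
        (asgnT : ℕ → Fin kT → Bool) (ok : ℕ → Fin kT),
        IsBoolWordOf T inp giT outp asgnT ok ∧
        ∃ hp : HPath A kT,
          (∀ j, hp.lIO j = Sum.elim (inp j) (outp j)) ∧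
          (∀ j, hp.asgnTP j = asgnT j) ∧
          (∀ j, hp.giT j = giT j) ∧
          (∀ j, hp.ok j = ok j) ∧
          (∀ j, hp.asgnT j = asgnT j) ∧
          ∀ N, ∃ j, N ≤ j ∧ ((hp.st j).1 ∈ A.F ∨ (hp.st j).2 = false)) :=
  stmt12_general D I O Q S kA kT A T hd0
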